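/- The Soft-HGR objective E[f(X)ᵀg(Y)] − (1/2)tr(Cov(f(X))Cov(g(Y))), over zero-mean f, g, is bounded above by (1/2)‖B̃‖_F² = (1/2)Σᵢ σᵢ(B̃)², and its supremum over all zero-mean f : 𝒳 → ℝᵏ, g : 𝒴 → ℝᵏ equals (1/2)Σ_{i=1}^{k} σᵢ(B̃)² when k ≤ rank(B̃). -/

import Mathlib

open Matrix Finset

/-!
Write `Φ = diag(√P_X) f` and `Ψ = diag(√P_Y) g`. When `f` has zero mean, `u₀ᵀ Φ = 0`, so the
objective equals `⟨B̃, M⟩ - ½ ‖M‖²` for `M = Φ Ψᵀ`, a matrix of rank at most `k`.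

For any `M` of rank at most `k`, rotate by an orthogonal eigenbasis `E` of `M Mᵀ`: all but
`rank M` rows of `Eᵀ M` vanish, and on each remaining row `2⟨p, q⟩ - ‖q‖² ≤ ‖p‖²`. Hence
`2⟨B̃, M⟩ - ‖M‖²` is at most the sum of `‖eⱼᵀ B̃‖² = ∑ᵢ σᵢ² ⟨eⱼ, uᵢ⟩²` over at most `k`
orthonormal vectors `eⱼ`. By Bessel's inequality the weights `cᵢ = ∑ⱼ ⟨eⱼ, uᵢ⟩²` lie in `[0, 1]`
and add up to at most `k`, so `∑ᵢ σᵢ² cᵢ` is at most the sum of the `k` largest `σᵢ²`.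

The truncated SVD `Φ = U_k Σ_k^{1/2}`, `Ψ = V_k Σ_k^{1/2}` attains this bound. Because
`u₀ᵀ B̃ = 0` and `B̃ v₀ = 0`, every singular pair with `σᵢ ≠ 0` is orthogonal to `(u₀, v₀)`, so
the corresponding features have zero mean. Since `σ` is antitone and `k ≤ rank B̃`, the first `k`
singular values are nonzero.
-/

theorem Fin.map_castLEEmb_univ {k N : ℕ} (h : k ≤ N) :
    univ.map (Fin.castLEEmb h) = univ.filter (fun i : Fin N => (i : ℕ) < k) := by
  ext i
  simp only [mem_map, mem_univ, true_and, mem_filter, Fin.coe_castLEEmb]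
  exact ⟨fun ⟨l, hl⟩ => hl ▸ l.isLt, fun hi => ⟨⟨i, hi⟩, rfl⟩⟩

theorem sum_mul_le_sum_filter_lt {N k : ℕ} {s c : Fin N → ℝ} (hs0 : ∀ i, 0 ≤ s i)
    (hs : Antitone s) (hc0 : ∀ i, 0 ≤ c i) (hc1 : ∀ i, c i ≤ 1) (hck : ∑ i, c i ≤ k) :
    ∑ i, s i * c i ≤ ∑ i ∈ univ.filter (fun i : Fin N => (i : ℕ) < k), s i := by
  set F := univ.filter (fun i : Fin N => (i : ℕ) < k)
  rcases le_or_gt N k with hNk | hkN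
  · rw [show F = univ from filter_true_of_mem fun i _ => i.isLt.trans_le hNk]
    exact sum_le_sum fun i _ => mul_le_of_le_one_right (hs0 i) (hc1 i)
  -- the weight `t` lies below every `s i` with `i ∈ F` and above every other one
  set t := s ⟨k, hkN⟩
  set d : Fin N → ℝ := fun i => (if i ∈ F then 1 else 0) - c i
  have hd : ∀ i, t * d i ≤ s i * d i := fun i => by
    by_cases hi : i ∈ F
    · simp only [d, hi, if_true]
      exact mul_le_mul_of_nonneg_right (hs (Fin.le_def.mpr (mem_filter.mp hi).2.le))
        (sub_nonneg.mpr (hc1 i))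
    · simp only [d, hi, if_false, zero_sub, mul_neg, neg_le_neg_iff]
      exact mul_le_mul_of_nonneg_right (hs (Fin.le_def.mpr (by simpa [F] using hi))) (hc0 i)
  have hsd : ∑ i, s i * d i = ∑ i ∈ F, s i - ∑ i, s i * c i := by
    simp only [d, mul_sub, mul_ite, mul_one, mul_zero, sum_sub_distrib, sum_ite_mem, univ_inter]
  have htd : ∑ i, t * d i = t * (k - ∑ i, c i) := by
    have hF : (#F : ℝ) = k := by
      simp only [F, ← Fin.map_castLEEmb_univ hkN.le, card_map, card_univ, Fintype.card_fin]
    rw [← mul_sum, sum_sub_distrib, ← sum_filter, sum_const, nsmul_one, filter_mem_eq_inter,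
      univ_inter, hF]
  have := sum_le_sum fun i (_ : i ∈ univ) => hd i
  rw [hsd, htd] at this
  linarith [mul_nonneg (hs0 ⟨k, hkN⟩) (sub_nonneg.mpr hck)]

theorem rank_mul_diagonal_mul_le {X Y ι : Type*} [Fintype Y] [Fintype ι] [DecidableEq ι]
    (A : Matrix X ι ℝ) (σ : ι → ℝ) (C : Matrix ι Y ℝ) :
    (A * diagonal σ * C).rank ≤ Fintype.card {i // σ i ≠ 0} := by
  classical
  calc (A * diagonal σ * C).rank ≤ (A * diagonal σ).rank := rank_mul_le_left _ _
    _ ≤ (diagonal σ).rank := rank_mul_le_right _ _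
    _ = _ := rank_diagonal σ

theorem rank_mul_transpose_le {X Y : Type*} [Fintype Y] {k : ℕ} (A : Matrix X (Fin k) ℝ)
    (C : Matrix Y (Fin k) ℝ) : (A * Cᵀ).rank ≤ k :=
  (rank_mul_le_left A Cᵀ).trans ((rank_le_card_width A).trans_eq (Fintype.card_fin k))

theorem sum_smul_vecMulVec_eq_mul_diagonal_mul {X Y ι : Type*} [Fintype ι] [DecidableEq ι]
    (σ : ι → ℝ) (u : ι → X → ℝ) (v : ι → Y → ℝ) :
    ∑ i, σ i • vecMulVec (u i) (v i) = (of u)ᵀ * diagonal σ * of v := by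
  ext x y
  rw [mul_apply]
  simp only [Matrix.sum_apply, Matrix.smul_apply, vecMulVec_apply, mul_diagonal, transpose_apply,
    of_apply, smul_eq_mul]
  exact sum_congr rfl fun i _ => by ring

theorem card_ne_zero_le_of_eq_zero {N : ℕ} {σ : Fin N → ℝ} (hσ0 : ∀ i, 0 ≤ σ i)
    (hσ : Antitone σ) {i : Fin N} (hi : σ i = 0) : Fintype.card {j // σ j ≠ 0} ≤ i := by
  classical
  rw [Fintype.card_subtype, ← Fin.card_Iio i]
  refine card_le_card fun j hj => ?_
  simp only [mem_filter, mem_univ, true_and] at hj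
  exact mem_Iio.mpr (lt_of_not_ge fun hij => hj ((hi ▸ hσ hij).antisymm (hσ0 j)))

theorem ne_zero_of_lt_of_le_rank {X Y : Type*} [Fintype Y] {N k : ℕ} {σ : Fin N → ℝ}
    (hσ0 : ∀ i, 0 ≤ σ i) (hσ : Antitone σ) {A : Matrix X (Fin N) ℝ} {C : Matrix (Fin N) Y ℝ}
    (hk : k ≤ (A * diagonal σ * C).rank) {i : Fin N} (hi : (i : ℕ) < k) : σ i ≠ 0 := fun h0 =>
  (hk.trans ((rank_mul_diagonal_mul_le A σ C).trans
    (card_ne_zero_le_of_eq_zero hσ0 hσ h0))).not_gt hi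

section Frobenius

variable {X Y ι κ : Type*} [Fintype X] [Fintype Y]

theorem diag_transpose_mul_mul_transpose_mul_le [Fintype ι] [DecidableEq ι] {Q : Matrix X ι ℝ}
    (hQ : Qᵀ * Q = 1) (W : Matrix X κ ℝ) (j : κ) : (Wᵀ * Q * Qᵀ * W) j j ≤ (Wᵀ * W) j j := by
  set R := W - Q * (Qᵀ * W)
  have hQQ : Qᵀ * (Q * (Qᵀ * W)) = Qᵀ * W := by rw [← Matrix.mul_assoc, hQ, Matrix.one_mul]
  have hR : Rᵀ * R = Wᵀ * W - Wᵀ * Q * Qᵀ * W := by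
    simp only [R, transpose_sub, transpose_mul, Matrix.transpose_transpose, Matrix.sub_mul,
      Matrix.mul_sub, Matrix.mul_assoc, hQQ]
    abel
  have : 0 ≤ (Rᵀ * R) j j := by
    rw [mul_apply]; exact sum_nonneg fun x _ => mul_self_nonneg _
  rw [hR, Matrix.sub_apply] at this
  linarith

theorem exists_orthogonal_transpose_mul_eq_zero_off [DecidableEq X] (M : Matrix X Y ℝ) :
    ∃ E : Matrix X X ℝ, Eᵀ * E = 1 ∧ E * Eᵀ = 1 ∧
      ∃ S : Finset X, #S = M.rank ∧ ∀ j ∉ S, (Eᵀ * M) j = 0 := by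
  have hH : (M * Mᵀ).IsHermitian := by
    simpa using isHermitian_mul_conjTranspose_self M
  set E : Matrix X X ℝ := ↑hH.eigenvectorUnitary
  have hE : Eᵀ * E = 1 := by
    simpa [E, star_eq_conjTranspose] using Unitary.coe_star_mul_self hH.eigenvectorUnitary
  have hE' : E * Eᵀ = 1 := by
    simpa [E, star_eq_conjTranspose] using Unitary.coe_mul_star_self hH.eigenvectorUnitary
  have hdiag : (Eᵀ * M) * (Eᵀ * M)ᵀ = diagonal hH.eigenvalues := by
    have := hH.conjStarAlgAut_star_eigenvectorUnitary
    simp only [star_eq_conjTranspose, conjTranspose_eq_transpose_of_trivial,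
      Unitary.conjStarAlgAut_star_apply, RCLike.ofReal_real_eq_id, Function.id_comp] at this
    rw [← this]
    simp only [E, transpose_mul, Matrix.transpose_transpose, Matrix.mul_assoc]
  refine ⟨E, hE, hE', univ.filter (fun j => hH.eigenvalues j ≠ 0), ?_, fun j hj => ?_⟩
  · rw [← Fintype.card_subtype, ← hH.rank_eq_card_non_zero_eigs, rank_self_mul_transpose]
  · have : (Eᵀ * M) j ⬝ᵥ (Eᵀ * M) j = 0 := by
      have h := congrFun (congrFun hdiag j) j
      simp only [mem_filter, mem_univ, true_and, not_not] at hj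
      rw [diagonal_apply_eq, hj] at h
      exact h
    exact dotProduct_self_eq_zero.mp this

theorem two_trace_mul_transpose_sub_le [Fintype ι] (P Q : Matrix ι Y ℝ) (S : Finset ι)
    (hQ : ∀ j ∉ S, Q j = 0) :
    2 * trace (P * Qᵀ) - trace (Q * Qᵀ) ≤ ∑ j ∈ S, P j ⬝ᵥ P j := by
  have hle : ∀ j, 2 * P j ⬝ᵥ Q j - Q j ⬝ᵥ Q j ≤ P j ⬝ᵥ P j := fun j => by
    have : 0 ≤ (P j - Q j) ⬝ᵥ (P j - Q j) := Fintype.sum_nonneg fun _ => mul_self_nonneg _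
    simp only [sub_dotProduct, dotProduct_sub, dotProduct_comm (Q j) (P j)] at this
    linarith
  calc 2 * trace (P * Qᵀ) - trace (Q * Qᵀ) = ∑ j, (2 * P j ⬝ᵥ Q j - Q j ⬝ᵥ Q j) := by
        rw [sum_sub_distrib, ← mul_sum]; rfl
    _ = ∑ j ∈ S, (2 * P j ⬝ᵥ Q j - Q j ⬝ᵥ Q j) :=
        (sum_subset (subset_univ S) fun j _ hj => by simp [hQ j hj]).symm
    _ ≤ ∑ j ∈ S, P j ⬝ᵥ P j := sum_le_sum fun j _ => hle j

section SVD

variable {N k : ℕ} {B : Matrix X Y ℝ} {U : Matrix X (Fin N) ℝ} {V : Matrix Y (Fin N) ℝ}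
  {σ : Fin N → ℝ}

theorem row_mul_svd_dotProduct_self (hV : Vᵀ * V = 1) (W : Matrix ι X ℝ) (j : ι) :
    (W * (U * diagonal σ * Vᵀ)) j ⬝ᵥ (W * (U * diagonal σ * Vᵀ)) j
      = ∑ i, σ i ^ 2 * (W * U) j i ^ 2 := by
  have h : (W * (U * diagonal σ * Vᵀ)) * (W * (U * diagonal σ * Vᵀ))ᵀ
      = (W * U) * diagonal (fun i => σ i ^ 2) * (W * U)ᵀ := by
    simp only [transpose_mul, diagonal_transpose, Matrix.transpose_transpose, Matrix.mul_assoc]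
    rw [← Matrix.mul_assoc Vᵀ V, hV, Matrix.one_mul, ← Matrix.mul_assoc (diagonal σ),
      diagonal_mul_diagonal]
    simp only [sq]
  refine (congrFun (congrFun h j) j).trans ?_
  rw [mul_apply]
  simp only [mul_diagonal, transpose_apply]
  exact sum_congr rfl fun i _ => by ring

theorem sum_dotProduct_self_transpose_mul_le [Fintype ι] [DecidableEq ι]
    (hB : B = U * diagonal σ * Vᵀ) (hU : Uᵀ * U = 1) (hV : Vᵀ * V = 1) (hσ0 : ∀ i, 0 ≤ σ i)
    (hσ : Antitone σ) {E : Matrix X ι ℝ} (hE : Eᵀ * E = 1) {S : Finset ι} (hS : #S ≤ k) :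
    ∑ j ∈ S, (Eᵀ * B) j ⬝ᵥ (Eᵀ * B) j
      ≤ ∑ i ∈ univ.filter (fun i : Fin N => (i : ℕ) < k), σ i ^ 2 := by
  set W := Eᵀ * U
  set c : Fin N → ℝ := fun i => ∑ j ∈ S, W j i ^ 2
  have hc1 : ∀ i, c i ≤ 1 := fun i =>
    calc c i ≤ ∑ j, W j i ^ 2 := sum_le_univ_sum_of_nonneg fun _ => sq_nonneg _
      _ = (Uᵀ * E * Eᵀ * U) i i := by
        rw [show Uᵀ * E * Eᵀ * U = Wᵀ * W by
          simp only [W, transpose_mul, Matrix.transpose_transpose, Matrix.mul_assoc], mul_apply]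
        simp only [transpose_apply, sq]
      _ ≤ (Uᵀ * U) i i := diag_transpose_mul_mul_transpose_mul_le hE U i
      _ = 1 := by rw [hU, one_apply_eq]
  have hck : ∑ i, c i ≤ k :=
    calc ∑ i, c i = ∑ j ∈ S, (Eᵀ * U * Uᵀ * E) j j := by
          rw [sum_comm]
          refine sum_congr rfl fun j _ => ?_
          rw [show Eᵀ * U * Uᵀ * E = W * Wᵀ by
            simp only [W, transpose_mul, Matrix.transpose_transpose, Matrix.mul_assoc], mul_apply]
          simp only [transpose_apply, sq]
      _ ≤ ∑ j ∈ S, (Eᵀ * E) j j :=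
          sum_le_sum fun j _ => diag_transpose_mul_mul_transpose_mul_le hU E j
      _ ≤ k := by simp [hE, hS]
  calc ∑ j ∈ S, (Eᵀ * B) j ⬝ᵥ (Eᵀ * B) j = ∑ i, σ i ^ 2 * c i := by
        simp only [hB, row_mul_svd_dotProduct_self hV, c, mul_sum]; exact sum_comm
    _ ≤ _ := sum_mul_le_sum_filter_lt (fun i => sq_nonneg _)
          (fun i j h => pow_le_pow_left₀ (hσ0 j) (hσ h) 2)
          (fun i => sum_nonneg fun _ _ => sq_nonneg _) hc1 hck

theorem two_trace_mul_transpose_sub_le_of_rank_le (hB : B = U * diagonal σ * Vᵀ)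
    (hU : Uᵀ * U = 1) (hV : Vᵀ * V = 1) (hσ0 : ∀ i, 0 ≤ σ i) (hσ : Antitone σ)
    {M : Matrix X Y ℝ} (hM : M.rank ≤ k) :
    2 * trace (B * Mᵀ) - trace (M * Mᵀ)
      ≤ ∑ i ∈ univ.filter (fun i : Fin N => (i : ℕ) < k), σ i ^ 2 := by
  classical
  obtain ⟨E, hE, hE', S, hS, hQ⟩ := exists_orthogonal_transpose_mul_eq_zero_off M
  have hconj : ∀ P : Matrix X Y ℝ, trace ((Eᵀ * P) * (Eᵀ * M)ᵀ) = trace (P * Mᵀ) := by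
    intro P
    rw [transpose_mul, Matrix.transpose_transpose, Matrix.mul_assoc, trace_mul_comm,
      Matrix.mul_assoc, Matrix.mul_assoc, hE', Matrix.mul_one]
  calc 2 * trace (B * Mᵀ) - trace (M * Mᵀ)
      = 2 * trace ((Eᵀ * B) * (Eᵀ * M)ᵀ) - trace ((Eᵀ * M) * (Eᵀ * M)ᵀ) := by
        rw [hconj, hconj]
    _ ≤ ∑ j ∈ S, (Eᵀ * B) j ⬝ᵥ (Eᵀ * B) j := two_trace_mul_transpose_sub_le _ _ S hQ
    _ ≤ _ := sum_dotProduct_self_transpose_mul_le hB hU hV hσ0 hσ hE (hS.trans_le hM)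

theorem trace_svd_mul_transpose_svd (hU : Uᵀ * U = 1) (hV : Vᵀ * V = 1) (s t : Fin N → ℝ) :
    trace ((U * diagonal s * Vᵀ) * (U * diagonal t * Vᵀ)ᵀ) = ∑ i, s i * t i := by
  simp only [transpose_mul, diagonal_transpose, Matrix.transpose_transpose, Matrix.mul_assoc]
  rw [← Matrix.mul_assoc Vᵀ V, hV, Matrix.one_mul, trace_mul_comm, Matrix.mul_assoc,
    Matrix.mul_assoc, hU, Matrix.mul_one, diagonal_mul_diagonal, trace_diagonal]

theorem vecMul_svd_eq_zero (hV : Vᵀ * V = 1) {a : X → ℝ} (ha : a ᵥ* (U * diagonal σ * Vᵀ) = 0)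
    {i : Fin N} (hi : σ i ≠ 0) : (a ᵥ* U) i = 0 := by
  have h : a ᵥ* (U * diagonal σ * Vᵀ) ᵥ* V = (a ᵥ* U) ᵥ* diagonal σ := by
    rw [vecMul_vecMul, Matrix.mul_assoc, hV, Matrix.mul_one, vecMul_vecMul]
  have hi' := congrFun h i
  rw [ha, zero_vecMul, vecMul_diagonal, Pi.zero_apply] at hi'
  exact (mul_eq_zero.mp hi'.symm).resolve_right hi

end SVD

end Frobenius

section SoftHGR

variable {X Y κ : Type*} [Fintype X] [Fintype Y] [Fintype κ]

noncomputable def softHGR (p : X → Y → ℝ) (f : X → κ → ℝ) (g : Y → κ → ℝ) : ℝ :=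
  (∑ x, ∑ y, p x y * (∑ i, f x i * g y i))
    - (1 / 2 : ℝ) * ((Matrix.of fun i j => ∑ x, (∑ y, p x y) * (f x i * f x j)) *
        (Matrix.of fun i j => ∑ y, (∑ x, p x y) * (g y i * g y j))).trace

variable {p : X → Y → ℝ} {a : X → ℝ} {b : Y → ℝ} {B : Matrix X Y ℝ}

theorem vecMul_sub_vecMulVec_eq_zero (hp : ∀ x y, p x y = a x * B x y * b y)
    (ha : ∀ x, ∑ y, p x y = a x ^ 2) (hb : ∀ y, ∑ x, p x y = b y ^ 2) (hb0 : ∀ y, b y ≠ 0)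
    (hsum : ∑ x, ∑ y, p x y = 1) : a ᵥ* (B - vecMulVec a b) = 0 := by
  have haB : a ᵥ* B = b := funext fun y => mul_right_cancel₀ (hb0 y) <| by
    simp only [vecMul, dotProduct, sum_mul, ← hp, hb, sq]
  have haa : a ⬝ᵥ a = 1 := by simp only [dotProduct, ← sq, ← ha, hsum]
  rw [vecMul_sub, haB, vecMul_vecMulVec, haa, one_smul, sub_self]

theorem softHGR_eq_of_mean_zero [DecidableEq X] [DecidableEq Y]
    (hp : ∀ x y, p x y = a x * B x y * b y)
    (ha : ∀ x, ∑ y, p x y = a x ^ 2) (hb : ∀ y, ∑ x, p x y = b y ^ 2) {f : X → κ → ℝ}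
    (hf : ∀ l, ∑ x, (∑ y, p x y) * f x l = 0) (g : Y → κ → ℝ) :
    softHGR p f g = trace ((B - vecMulVec a b) * (diagonal a * of f * (diagonal b * of g)ᵀ)ᵀ)
      - 1 / 2 * trace ((diagonal a * of f * (diagonal b * of g)ᵀ)
          * (diagonal a * of f * (diagonal b * of g)ᵀ)ᵀ) := by
  set A := diagonal a * of f
  set C := diagonal b * of g
  have hA : a ᵥ* A = 0 := funext fun l => by
    simpa [A, vecMul, dotProduct, ha, sq, mul_assoc] using hf l
  have hcross : trace (vecMulVec a b * (A * Cᵀ)ᵀ) = 0 := by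
    rw [transpose_mul, Matrix.transpose_transpose, ← Matrix.mul_assoc, trace_mul_comm,
      ← Matrix.mul_assoc, mul_vecMulVec, mulVec_transpose, hA, zero_vecMulVec, Matrix.zero_mul,
      trace_zero]
  have hAe : ∀ x l, A x l = a x * f x l := fun x l => diagonal_mul a _ x l
  have hCe : ∀ y l, C y l = b y * g y l := fun y l => diagonal_mul b _ y l
  have hE : ∑ x, ∑ y, p x y * (∑ i, f x i * g y i) = trace (B * (A * Cᵀ)ᵀ) := by
    change _ = ∑ x, B x ⬝ᵥ (A * Cᵀ) x
    simp only [dotProduct, mul_apply, transpose_apply, hAe, hCe, hp, mul_sum]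
    exact sum_congr rfl fun x _ => sum_congr rfl fun y _ => sum_congr rfl fun l _ => by ring
  have hf : (of fun i j => ∑ x, (∑ y, p x y) * (f x i * f x j)) = Aᵀ * A := by
    ext i j
    simp only [of_apply, mul_apply, transpose_apply, hAe, ha]
    exact sum_congr rfl fun x _ => by ring
  have hg : (of fun i j => ∑ y, (∑ x, p x y) * (g y i * g y j)) = Cᵀ * C := by
    ext i j
    simp only [of_apply, mul_apply, transpose_apply, hCe, hb]
    exact sum_congr rfl fun y _ => by ring
  have hM : trace ((A * Cᵀ) * (A * Cᵀ)ᵀ) = trace (Aᵀ * A * (Cᵀ * C)) := by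
    rw [transpose_mul A Cᵀ, Matrix.transpose_transpose, Matrix.mul_assoc, trace_mul_comm,
      trace_mul_comm (Aᵀ * A)]
    simp only [Matrix.mul_assoc]
  rw [softHGR, hE, hf, hg, Matrix.sub_mul, trace_sub, hcross, sub_zero, hM]

theorem softHGR_le_half_sum_sq {N k : ℕ}
    {U : Matrix X (Fin N) ℝ} {V : Matrix Y (Fin N) ℝ} {σ : Fin N → ℝ}
    (hp : ∀ x y, p x y = a x * B x y * b y) (ha : ∀ x, ∑ y, p x y = a x ^ 2)
    (hb : ∀ y, ∑ x, p x y = b y ^ 2) (hsvd : B - vecMulVec a b = U * diagonal σ * Vᵀ)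
    (hU : Uᵀ * U = 1) (hV : Vᵀ * V = 1) (hσ0 : ∀ i, 0 ≤ σ i) (hσ : Antitone σ)
    {f : X → Fin k → ℝ} (hf : ∀ l, ∑ x, (∑ y, p x y) * f x l = 0) (g : Y → Fin k → ℝ) :
    softHGR p f g ≤ 1 / 2 * ∑ i ∈ univ.filter (fun i : Fin N => (i : ℕ) < k), σ i ^ 2 := by
  classical
  have := two_trace_mul_transpose_sub_le_of_rank_le hsvd hU hV hσ0 hσ
    (rank_mul_transpose_le (diagonal a * of f) (diagonal b * of g))
  rw [softHGR_eq_of_mean_zero hp ha hb hf]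
  linarith

theorem vecMul_singularVectors_eq_zero {N : ℕ} {U : Matrix X (Fin N) ℝ}
    {V : Matrix Y (Fin N) ℝ} {σ : Fin N → ℝ} (hp : ∀ x y, p x y = a x * B x y * b y)
    (ha : ∀ x, ∑ y, p x y = a x ^ 2) (hb : ∀ y, ∑ x, p x y = b y ^ 2) (ha0 : ∀ x, a x ≠ 0)
    (hb0 : ∀ y, b y ≠ 0) (hsum : ∑ x, ∑ y, p x y = 1)
    (hsvd : B - vecMulVec a b = U * diagonal σ * Vᵀ) (hU : Uᵀ * U = 1) (hV : Vᵀ * V = 1)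
    {i : Fin N} (hi : σ i ≠ 0) : (a ᵥ* U) i = 0 ∧ (b ᵥ* V) i = 0 := by
  classical
  have hBa : a ᵥ* (U * diagonal σ * Vᵀ) = 0 :=
    hsvd ▸ vecMul_sub_vecMulVec_eq_zero hp ha hb hb0 hsum
  have hBb : b ᵥ* (V * diagonal σ * Uᵀ) = 0 := by
    have := vecMul_sub_vecMulVec_eq_zero (p := fun y x => p x y) (B := Bᵀ)
      (fun y x => (hp x y).trans (by rw [transpose_apply]; ring)) hb ha ha0
      (by rw [sum_comm]; exact hsum)
    rwa [← transpose_vecMulVec, ← transpose_sub, hsvd, transpose_mul, transpose_mul,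
      diagonal_transpose, Matrix.transpose_transpose, ← Matrix.mul_assoc] at this
  exact ⟨vecMul_svd_eq_zero hV hBa hi, vecMul_svd_eq_zero hU hBb hi⟩

theorem exists_softHGR_eq_half_sum_sq {N k : ℕ}
    {U : Matrix X (Fin N) ℝ} {V : Matrix Y (Fin N) ℝ} {σ : Fin N → ℝ}
    (hp : ∀ x y, p x y = a x * B x y * b y) (ha : ∀ x, ∑ y, p x y = a x ^ 2)
    (hb : ∀ y, ∑ x, p x y = b y ^ 2) (ha0 : ∀ x, a x ≠ 0) (hb0 : ∀ y, b y ≠ 0)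
    (hsum : ∑ x, ∑ y, p x y = 1) (hsvd : B - vecMulVec a b = U * diagonal σ * Vᵀ)
    (hU : Uᵀ * U = 1) (hV : Vᵀ * V = 1) (hσ0 : ∀ i, 0 ≤ σ i) (hσ : Antitone σ)
    (hk : k ≤ (U * diagonal σ * Vᵀ).rank) :
    ∃ f : X → Fin k → ℝ, ∃ g : Y → Fin k → ℝ,
      (∀ l, ∑ x, (∑ y, p x y) * f x l = 0) ∧ (∀ l, ∑ y, (∑ x, p x y) * g y l = 0) ∧
      softHGR p f g = 1 / 2 * ∑ i ∈ univ.filter (fun i : Fin N => (i : ℕ) < k), σ i ^ 2 := by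
  classical
  have hkN : k ≤ N := hk.trans <| (rank_mul_le_right _ _).trans <|
    (rank_le_card_height Vᵀ).trans_eq (Fintype.card_fin N)
  set c := Fin.castLE hkN
  have horth : ∀ l, (a ᵥ* U) (c l) = 0 ∧ (b ᵥ* V) (c l) = 0 := fun l =>
    vecMul_singularVectors_eq_zero hp ha hb ha0 hb0 hsum hsvd hU hV
      (ne_zero_of_lt_of_le_rank hσ0 hσ hk l.isLt)
  set f : X → Fin k → ℝ := fun x l => √(σ (c l)) * U x (c l) / a x
  set g : Y → Fin k → ℝ := fun y l => √(σ (c l)) * V y (c l) / b y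
  have hf : ∀ l, ∑ x, (∑ y, p x y) * f x l = 0 := fun l => by
    rw [← mul_zero √(σ (c l)), ← (horth l).1]
    simp only [ha, f, vecMul, dotProduct, mul_sum]
    exact sum_congr rfl fun x _ => by field_simp [ha0 x]
  have hg : ∀ l, ∑ y, (∑ x, p x y) * g y l = 0 := fun l => by
    rw [← mul_zero √(σ (c l)), ← (horth l).2]
    simp only [hb, g, vecMul, dotProduct, mul_sum]
    exact sum_congr rfl fun y _ => by field_simp [hb0 y]
  set t : Fin N → ℝ := fun i => if (i : ℕ) < k then σ i else 0
  have hM : diagonal a * of f * (diagonal b * of g)ᵀ = U * diagonal t * Vᵀ := by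
    ext x y
    simp only [mul_apply, diagonal_apply, ite_mul, zero_mul, mul_ite, mul_zero, sum_ite_eq,
      sum_ite_eq', mem_univ, if_true, transpose_apply, of_apply, t]
    rw [← sum_filter, ← Fin.map_castLEEmb_univ hkN, sum_map]
    refine sum_congr rfl fun l _ => ?_
    simp only [f, g, c, Fin.coe_castLEEmb]
    field_simp [ha0 x, hb0 y]
    rw [Real.sq_sqrt (hσ0 _)]
    ring
  have hσt : ∀ i, σ i * t i = t i * t i := fun i => by simp only [t]; split_ifs <;> simp
  refine ⟨f, g, hf, hg, ?_⟩
  rw [softHGR_eq_of_mean_zero hp ha hb hf, hsvd, hM, trace_svd_mul_transpose_svd hU hV,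
    trace_svd_mul_transpose_svd hU hV]
  simp only [← hσt, t, mul_ite, mul_zero, ← sum_filter, ← sq]
  ring

end SoftHGR

theorem soft_hgr_objective_supremum_general
    {X Y : Type*} [Fintype X] [Fintype Y] {k N : ℕ}
    (p : X → Y → ℝ) (hsum : ∑ x, ∑ y, p x y = 1)
    (hX : ∀ x, 0 < ∑ y, p x y) (hY : ∀ y, 0 < ∑ x, p x y)
    (B : Matrix X Y ℝ)
    (hB : ∀ x y, B x y = p x y / (Real.sqrt (∑ y', p x y') * Real.sqrt (∑ x', p x' y)))
    (u₀ : X → ℝ) (hu : ∀ x, u₀ x = Real.sqrt (∑ y, p x y))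
    (v₀ : Y → ℝ) (hv : ∀ y, v₀ y = Real.sqrt (∑ x, p x y))
    (Btil : Matrix X Y ℝ) (hBtil : Btil = B - vecMulVec u₀ v₀)
    (σ : Fin N → ℝ) (u : Fin N → X → ℝ) (v : Fin N → Y → ℝ)
    (hσ0 : ∀ i, 0 ≤ σ i) (hσmono : Antitone σ)
    (hON_u : ∀ i j, (∑ x, u i x * u j x) = if i = j then 1 else 0)
    (hON_v : ∀ i j, (∑ y, v i y * v j y) = if i = j then 1 else 0)
    (hSVD : Btil = ∑ i, σ i • vecMulVec (u i) (v i))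
    (hk : k ≤ Btil.rank) :
    (∀ (f : X → Fin k → ℝ) (g : Y → Fin k → ℝ),
        (∀ i, ∑ x, (∑ y, p x y) * f x i = 0) →
        (∀ i, ∑ y, (∑ x, p x y) * g y i = 0) →
        (∑ x, ∑ y, p x y * (∑ i, f x i * g y i))
            - (1 / 2 : ℝ) * ((Matrix.of fun i j => ∑ x, (∑ y, p x y) * (f x i * f x j)) *
                (Matrix.of fun i j => ∑ y, (∑ x, p x y) * (g y i * g y j))).trace
          ≤ (1 / 2 : ℝ) * ∑ i, σ i ^ 2) ∧
    sSup {r : ℝ | ∃ f : X → Fin k → ℝ, ∃ g : Y → Fin k → ℝ,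
        (∀ i, ∑ x, (∑ y, p x y) * f x i = 0) ∧
        (∀ i, ∑ y, (∑ x, p x y) * g y i = 0) ∧
        r = (∑ x, ∑ y, p x y * (∑ i, f x i * g y i))
            - (1 / 2 : ℝ) * ((Matrix.of fun i j => ∑ x, (∑ y, p x y) * (f x i * f x j)) *
                (Matrix.of fun i j => ∑ y, (∑ x, p x y) * (g y i * g y j))).trace}
      = (1 / 2 : ℝ) * ∑ i ∈ univ.filter (fun i : Fin N => (i : ℕ) < k), σ i ^ 2 := by
  classical
  set U : Matrix X (Fin N) ℝ := (of u)ᵀ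
  set V : Matrix Y (Fin N) ℝ := (of v)ᵀ
  have hU : Uᵀ * U = 1 := by ext i j; exact hON_u i j
  have hV : Vᵀ * V = 1 := by ext i j; exact hON_v i j
  subst hBtil
  have hsvd : B - vecMulVec u₀ v₀ = U * diagonal σ * Vᵀ :=
    hSVD.trans (sum_smul_vecMulVec_eq_mul_diagonal_mul σ u v)
  have hu0 : ∀ x, u₀ x ≠ 0 := fun x => hu x ▸ (Real.sqrt_pos.2 (hX x)).ne'
  have hv0 : ∀ y, v₀ y ≠ 0 := fun y => hv y ▸ (Real.sqrt_pos.2 (hY y)).ne'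
  have hpB : ∀ x y, p x y = u₀ x * B x y * v₀ y := fun x y => by
    rw [hB, ← hu, ← hv]; field_simp [hu0 x, hv0 y]
  have hPX : ∀ x, ∑ y, p x y = u₀ x ^ 2 := fun x => by rw [hu, Real.sq_sqrt (hX x).le]
  have hPY : ∀ y, ∑ x, p x y = v₀ y ^ 2 := fun y => by rw [hv, Real.sq_sqrt (hY y).le]
  have hbound : ∀ (f : X → Fin k → ℝ) g, (∀ i, ∑ x, (∑ y, p x y) * f x i = 0) →
      softHGR p f g ≤ _ := fun f g hf =>
    softHGR_le_half_sum_sq hpB hPX hPY hsvd hU hV hσ0 hσmono hf g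
  obtain ⟨f, g, hf, hg, hfg⟩ :=
    exists_softHGR_eq_half_sum_sq hpB hPX hPY hu0 hv0 hsum hsvd hU hV hσ0 hσmono (hsvd ▸ hk)
  refine ⟨fun f g hf _ => (hbound f g hf).trans ?_,
    IsGreatest.csSup_eq ⟨⟨f, g, hf, hg, hfg.symm⟩, ?_⟩⟩
  · gcongr
    exact subset_univ _
  · rintro r ⟨f, g, hf, -, rfl⟩
    exact hbound f g hf

/-- Over zero-mean `f : 𝒳 → ℝᵏ`, `g : 𝒴 → ℝᵏ`, the Soft-HGR objective
`E[f(X)ᵀg(Y)] - (1/2) tr(Cov(f) Cov(g))` (with `Cov(f) = ∑ x, P_X(x) f(x)f(x)ᵀ` since `f`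
is zero-mean) is bounded above by `(1/2)‖B̃‖_F² = (1/2)∑ᵢ σᵢ(B̃)²`, and its supremum equals
`(1/2)∑_{i=1}^k σᵢ(B̃)²` whenever `k ≤ rank(B̃)`.  The singular values are given through an
orthonormal SVD of `B̃ = B - u₀v₀ᵀ`. -/
theorem soft_hgr_objective_supremum
    {X Y : Type*} [Fintype X] [Fintype Y] [DecidableEq X] [DecidableEq Y] {k N : ℕ}
    (p : X → Y → ℝ) (hp : ∀ x y, 0 ≤ p x y) (hsum : ∑ x, ∑ y, p x y = 1)
    (hX : ∀ x, 0 < ∑ y, p x y) (hY : ∀ y, 0 < ∑ x, p x y)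
    (B : Matrix X Y ℝ)
    (hB : ∀ x y, B x y = p x y / (Real.sqrt (∑ y', p x y') * Real.sqrt (∑ x', p x' y)))
    (u₀ : X → ℝ) (hu : ∀ x, u₀ x = Real.sqrt (∑ y, p x y))
    (v₀ : Y → ℝ) (hv : ∀ y, v₀ y = Real.sqrt (∑ x, p x y))
    (Btil : Matrix X Y ℝ) (hBtil : Btil = B - vecMulVec u₀ v₀)
    (σ : Fin N → ℝ) (u : Fin N → X → ℝ) (v : Fin N → Y → ℝ)
    (hσ0 : ∀ i, 0 ≤ σ i) (hσmono : Antitone σ)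
    (hON_u : ∀ i j, (∑ x, u i x * u j x) = if i = j then 1 else 0)
    (hON_v : ∀ i j, (∑ y, v i y * v j y) = if i = j then 1 else 0)
    (hSVD : Btil = ∑ i, σ i • vecMulVec (u i) (v i))
    (hk : k ≤ Btil.rank) :
    (∀ (f : X → Fin k → ℝ) (g : Y → Fin k → ℝ),
        (∀ i, ∑ x, (∑ y, p x y) * f x i = 0) →
        (∀ i, ∑ y, (∑ x, p x y) * g y i = 0) →
        (∑ x, ∑ y, p x y * (∑ i, f x i * g y i))
            - (1 / 2 : ℝ) * ((Matrix.of fun i j => ∑ x, (∑ y, p x y) * (f x i * f x j)) *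
                (Matrix.of fun i j => ∑ y, (∑ x, p x y) * (g y i * g y j))).trace
          ≤ (1 / 2 : ℝ) * ∑ i, σ i ^ 2) ∧
    sSup {r : ℝ | ∃ f : X → Fin k → ℝ, ∃ g : Y → Fin k → ℝ,
        (∀ i, ∑ x, (∑ y, p x y) * f x i = 0) ∧
        (∀ i, ∑ y, (∑ x, p x y) * g y i = 0) ∧
        r = (∑ x, ∑ y, p x y * (∑ i, f x i * g y i))
            - (1 / 2 : ℝ) * ((Matrix.of fun i j => ∑ x, (∑ y, p x y) * (f x i * f x j)) *
                (Matrix.of fun i j => ∑ y, (∑ x, p x y) * (g y i * g y j))).trace}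
      = (1 / 2 : ℝ) * ∑ i ∈ univ.filter (fun i : Fin N => (i : ℕ) < k), σ i ^ 2 :=
  soft_hgr_objective_supremum_general p hsum hX hY B hB u₀ hu v₀ hv Btil hBtil σ u v hσ0 hσmono
    hON_u hON_v hSVD hk
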